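/- For the Ziegler pendulum with F = 0 and k₂ = 0, the total energy H = T + k₁φ₁²/2, where T = (m₁/2)(v₂²l₂² + (v₁+v₂)²l₁² + 2l₁l₂v₂(v₁+v₂)cos φ₁) + (m₂/2)v₂²l₂² + (m₃/2)(v₂²l₂² + (v₁+v₂)²l₃² - 2l₂l₃v₂(v₁+v₂)cos φ₁), is a first integral of the reduced system. -/
import Mathlib


/-- The kinetic energy `T` of the Ziegler pendulum. -/
noncomputable def kinEnergy (m1 m2 m3 l1 l2 l3 φ v1 v2 : ℝ) : ℝ :=
  m1 / 2 * (v2 ^ 2 * l2 ^ 2 + (v1 + v2) ^ 2 * l1 ^ 2 +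
      2 * l1 * l2 * v2 * (v1 + v2) * Real.cos φ) +
    m2 / 2 * v2 ^ 2 * l2 ^ 2 +
    m3 / 2 * (v2 ^ 2 * l2 ^ 2 + (v1 + v2) ^ 2 * l3 ^ 2 -
      2 * l2 * l3 * v2 * (v1 + v2) * Real.cos φ)

/-- The total energy `H = T + k₁φ₁²/2` (case `k₂ = 0`). -/
noncomputable def totEnergy (m1 m2 m3 l1 l2 l3 k1 φ v1 v2 : ℝ) : ℝ :=
  kinEnergy m1 m2 m3 l1 l2 l3 φ v1 v2 + k1 * φ ^ 2 / 2

/-- For `F = 0` and `k₂ = 0`, the total energy `H = T + k₁φ₁²/2` is a first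
integral of the reduced Ziegler pendulum system. -/
theorem energy_first_integral
    (m1 m2 m3 l1 l2 l3 k1 : ℝ)
    (hm1 : 0 < m1) (hm2 : 0 < m2) (hm3 : 0 < m3)
    (hl1 : 0 < l1) (hl2 : 0 < l2) (hl3 : 0 < l3)
    (φ v1 v2 a1 a2 : ℝ → ℝ)
    (hφ : ∀ t, HasDerivAt φ (v1 t) t)
    (hv1 : ∀ t, HasDerivAt v1 (a1 t) t)
    (hv2 : ∀ t, HasDerivAt v2 (a2 t) t)
    (heq1 : ∀ t, (m1 * l1 ^ 2 + m3 * l3 ^ 2) * a1 t +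
        (m1 * l1 ^ 2 + m3 * l3 ^ 2 + (m1 * l1 - m3 * l3) * l2 * Real.cos (φ t)) * a2 t =
      -k1 * φ t - (m1 * l1 - m3 * l3) * l2 * (v2 t) ^ 2 * Real.sin (φ t))
    (heq2 : ∀ t, (m1 * l1 ^ 2 + m3 * l3 ^ 2 + (m1 * l1 - m3 * l3) * l2 * Real.cos (φ t)) * a1 t +
        ((m1 + m2 + m3) * l2 ^ 2 + m1 * l1 ^ 2 + m3 * l3 ^ 2 +
          2 * (m1 * l1 - m3 * l3) * l2 * Real.cos (φ t)) * a2 t =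
      (m1 * l1 - m3 * l3) * l2 * v1 t * (v1 t + 2 * v2 t) * Real.sin (φ t))
    (hdet : ∀ t, (m1 * l1 ^ 2 + m3 * l3 ^ 2) *
        ((m1 + m2 + m3) * l2 ^ 2 + m1 * l1 ^ 2 + m3 * l3 ^ 2 +
          2 * (m1 * l1 - m3 * l3) * l2 * Real.cos (φ t)) -
        (m1 * l1 ^ 2 + m3 * l3 ^ 2 + (m1 * l1 - m3 * l3) * l2 * Real.cos (φ t)) ^ 2 ≠ 0) :
    ∀ t s : ℝ, totEnergy m1 m2 m3 l1 l2 l3 k1 (φ t) (v1 t) (v2 t) =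
      totEnergy m1 m2 m3 l1 l2 l3 k1 (φ s) (v1 s) (v2 s) := by

  have key : ∀ t : ℝ, HasDerivAt
      (fun u => totEnergy m1 m2 m3 l1 l2 l3 k1 (φ u) (v1 u) (v2 u)) 0 t := by
    intro t
    have hc : HasDerivAt (fun u => Real.cos (φ u)) (-Real.sin (φ t) * v1 t) t := (hφ t).cos
    have hs : HasDerivAt (fun u => v1 u + v2 u) (a1 t + a2 t) t := (hv1 t).add (hv2 t)
    have h1 := (((((hv2 t).pow 2).mul_const (l2 ^ 2)).add ((hs.pow 2).mul_const (l1 ^ 2))).add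
      ((((hv2 t).const_mul (2 * l1 * l2)).mul hs).mul hc)).const_mul (m1 / 2)
    have h2 := (((hv2 t).pow 2).const_mul (m2 / 2)).mul_const (l2 ^ 2)
    have h3 := (((((hv2 t).pow 2).mul_const (l2 ^ 2)).add ((hs.pow 2).mul_const (l3 ^ 2))).sub
      ((((hv2 t).const_mul (2 * l2 * l3)).mul hs).mul hc)).const_mul (m3 / 2)
    have h4 := (((hφ t).pow 2).const_mul k1).div_const 2
    have big := ((h1.add h2).add h3).add h4
    have goal : HasDerivAt (fun u => totEnergy m1 m2 m3 l1 l2 l3 k1 (φ u) (v1 u) (v2 u))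
        (m1 / 2 * ((↑2 * v2 t ^ (2 - 1) * a2 t) * l2 ^ 2 +
            (↑2 * (v1 t + v2 t) ^ (2 - 1) * (a1 t + a2 t)) * l1 ^ 2 +
            ((2 * l1 * l2 * a2 t * (v1 t + v2 t) + 2 * l1 * l2 * v2 t * (a1 t + a2 t)) *
                Real.cos (φ t) +
              2 * l1 * l2 * v2 t * (v1 t + v2 t) * (-Real.sin (φ t) * v1 t))) +
          (m2 / 2 * (↑2 * v2 t ^ (2 - 1) * a2 t)) * l2 ^ 2 +
          m3 / 2 * ((↑2 * v2 t ^ (2 - 1) * a2 t) * l2 ^ 2 +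
            (↑2 * (v1 t + v2 t) ^ (2 - 1) * (a1 t + a2 t)) * l3 ^ 2 -
            ((2 * l2 * l3 * a2 t * (v1 t + v2 t) + 2 * l2 * l3 * v2 t * (a1 t + a2 t)) *
                Real.cos (φ t) +
              2 * l2 * l3 * v2 t * (v1 t + v2 t) * (-Real.sin (φ t) * v1 t))) +
          k1 * (↑2 * φ t ^ (2 - 1) * v1 t) / 2) t := by
      unfold totEnergy kinEnergy
      exact big
    convert goal using 1
    push_cast
    linear_combination (-(v1 t)) * heq1 t - v2 t * heq2 t
  intro t s
  exact is_const_of_deriv_eq_zero (fun x => (key x).differentiableAt)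
    (fun x => (key x).deriv) t s
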